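/- arXiv:1503.02365 — 6 statements merged into one kernel-verified Lean document; each statement's English description precedes it below -/
import Mathlib

section
/- Let ℓ > 0, k ∈ ℤ and C ≥ 0. If ω : [−1,1] → ℝ is twice continuously differentiable and satisfies (P⁺_{ℓ,k} ω)(τ) = h(τ) on [−1,1] with |h(τ)| ≤ C for all τ ∈ [−1,1] and |ω(−1)| ≤ C, |ω(1)| ≤ C, then |ω(τ)| ≤ C for all τ ∈ [−1,1]. -/
open Real Set Topology Filter

lemma one_side_Pplus
    (ℓ : ℝ) (hℓ : 0 < ℓ) (k : ℤ) (C : ℝ) (hC : 0 ≤ C)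
    (ω h : ℝ → ℝ)
    (hω : ContDiffOn ℝ 2 ω (Icc (-1 : ℝ) 1))
    (hP : ∀ τ ∈ Icc (-1 : ℝ) 1,
      -(τ ^ 2 + ℓ ^ 2) * iteratedDerivWithin 2 ω (Icc (-1 : ℝ) 1) τ
        - 2 * τ * derivWithin ω (Icc (-1 : ℝ) 1) τ
        + (1 + (τ + (k : ℝ)) ^ 2 / (τ ^ 2 + ℓ ^ 2)) * ω τ = h τ)
    (hh : ∀ τ ∈ Icc (-1 : ℝ) 1, h τ ≤ C)
    (hbc₁ : ω (-1) ≤ C) (hbc₂ : ω 1 ≤ C) :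
    ∀ τ ∈ Icc (-1 : ℝ) 1, ω τ ≤ C := by
  set s : Set ℝ := Icc (-1 : ℝ) 1 with hs
  have hunique : UniqueDiffOn ℝ s := uniqueDiffOn_Icc (by norm_num)
  have hcont : ContinuousOn ω s := hω.continuousOn
  obtain ⟨τ₀, hτ₀s, hmax⟩ :=
    isCompact_Icc.exists_isMaxOn (nonempty_Icc.2 (by norm_num)) hcont
  intro τ hτ
  have hle : ω τ ≤ ω τ₀ := hmax hτ
  by_contra hcon
  push_neg at hcon
  have hgt : C < ω τ₀ := lt_of_lt_of_le hcon hle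
  -- τ₀ is interior
  have hne1 : τ₀ ≠ -1 := fun he => absurd hgt (by rw [he]; exact not_lt.2 hbc₁)
  have hne2 : τ₀ ≠ 1 := fun he => absurd hgt (by rw [he]; exact not_lt.2 hbc₂)
  have hτ₀lt : -1 < τ₀ := lt_of_le_of_ne hτ₀s.1 (Ne.symm hne1)
  have hτ₀lt' : τ₀ < 1 := lt_of_le_of_ne hτ₀s.2 hne2
  have hnhds : s ∈ 𝓝 τ₀ := Icc_mem_nhds hτ₀lt hτ₀lt'
  have hlocmax : IsLocalMax ω τ₀ := hmax.isLocalMax hnhds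
  -- first derivative vanishes
  have hderiv0 : deriv ω τ₀ = 0 := hlocmax.deriv_eq_zero
  set F : ℝ → ℝ := derivWithin ω s with hF
  have hFτ₀ : F τ₀ = 0 := by
    rw [hF, derivWithin_of_mem_nhds hnhds, hderiv0]
  -- F is C¹ on s
  have hF1 : ContDiffOn ℝ 1 F s := hω.derivWithin hunique (by norm_num)
  have hFdiff : DifferentiableAt ℝ F τ₀ :=
    ((hF1.differentiableOn (by norm_num)) τ₀ hτ₀s).differentiableAt hnhds
  set d : ℝ := deriv F τ₀ with hd
  have hFhas : HasDerivAt F d τ₀ := hFdiff.hasDerivAt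
  -- identify d with the second iterated derivative
  have hiter : iteratedDerivWithin 2 ω s τ₀ = d := by
    have h1 : iteratedDerivWithin 2 ω s τ₀ = derivWithin (iteratedDerivWithin 1 ω s) s τ₀ :=
      congrFun iteratedDerivWithin_succ τ₀
    have h2 : derivWithin (iteratedDerivWithin 1 ω s) s τ₀ = derivWithin F s τ₀ :=
      derivWithin_congr (fun y hy => congrFun iteratedDerivWithin_one y)
        (congrFun iteratedDerivWithin_one τ₀)
    rw [h1, h2, derivWithin_of_mem_nhds hnhds]
  -- second derivative test: d ≤ 0
  have hd0 : d ≤ 0 := by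
    by_contra hdpos
    push_neg at hdpos
    have hslope : Filter.Tendsto (slope F τ₀) (𝓝[≠] τ₀) (𝓝 d) :=
      hasDerivAt_iff_tendsto_slope.mp hFhas
    have hev : ∀ᶠ y in 𝓝[≠] τ₀, 0 < slope F τ₀ y :=
      hslope.eventually (lt_mem_nhds hdpos)
    rw [eventually_nhdsWithin_iff, Metric.eventually_nhds_iff] at hev
    obtain ⟨δ, hδpos, hball⟩ := hev
    set b : ℝ := τ₀ + min δ (1 - τ₀) / 2 with hb
    have hminpos : 0 < min δ (1 - τ₀) := lt_min hδpos (by linarith)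
    have hτ₀b : τ₀ < b := by rw [hb]; linarith
    have hb1 : b < 1 := by
      have : min δ (1 - τ₀) ≤ 1 - τ₀ := min_le_right _ _
      rw [hb]; linarith
    have hbδ : b - τ₀ < δ := by
      have : min δ (1 - τ₀) ≤ δ := min_le_left _ _
      rw [hb]; linarith
    have hFpos : ∀ x ∈ Ioo τ₀ b, 0 < deriv ω x := by
      intro x hx
      have hx1 : τ₀ < x := hx.1
      have hx2 : x < b := hx.2
      have hxs : s ∈ 𝓝 x := Icc_mem_nhds (by linarith) (by linarith)
      have hdist : dist x τ₀ < δ := by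
        rw [Real.dist_eq, abs_of_pos (by linarith : (0:ℝ) < x - τ₀)]; linarith
      have hsl : 0 < slope F τ₀ x := hball hdist (by intro hxe; simp at hxe; linarith)
      rw [slope_def_field, hFτ₀, sub_zero] at hsl
      have hxτ : 0 < x - τ₀ := by linarith
      have hFx : 0 < F x := by
        have := mul_pos hsl hxτ
        rwa [div_mul_cancel₀ _ (ne_of_gt hxτ)] at this
      rwa [← derivWithin_of_mem_nhds hxs]
    have hmono : StrictMonoOn ω (Icc τ₀ b) := by
      apply strictMonoOn_of_deriv_pos (convex_Icc _ _)
      · exact hcont.mono (Icc_subset_Icc (le_of_lt hτ₀lt) (le_of_lt hb1))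
      · intro x hx
        rw [interior_Icc] at hx
        exact hFpos x hx
    have : ω τ₀ < ω b :=
      hmono (left_mem_Icc.2 (le_of_lt hτ₀b)) (right_mem_Icc.2 (le_of_lt hτ₀b)) hτ₀b
    have hbs : b ∈ s := ⟨by linarith, le_of_lt hb1⟩
    exact absurd (hmax hbs) (not_le.2 this)
  -- conclude from the equation at τ₀
  have heq := hP τ₀ hτ₀s
  rw [hiter, hFτ₀] at heq
  have hhle : h τ₀ ≤ C := hh τ₀ hτ₀s
  have hden : 0 < τ₀ ^ 2 + ℓ ^ 2 := by positivity
  have hq : 0 ≤ (τ₀ + (k : ℝ)) ^ 2 / (τ₀ ^ 2 + ℓ ^ 2) := by positivity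
  have hω0 : 0 ≤ ω τ₀ := le_of_lt (lt_of_le_of_lt hC hgt)
  nlinarith [mul_nonneg (le_of_lt hden) (neg_nonneg.2 hd0), mul_nonneg hq hω0]

/-- A priori sup bound for the Fourier-mode operator
`P⁺_{ℓ,k} ω = -(τ²+ℓ²)ω'' - 2τω' + (1 + (τ+k)²/(τ²+ℓ²))ω` on `[-1,1]`:
if `P⁺_{ℓ,k} ω = h` with `|h| ≤ C` on `[-1,1]` and `|ω(±1)| ≤ C`, then
`|ω| ≤ C` on `[-1,1]`. -/
theorem sup_bound_Pplus
    (ℓ : ℝ) (hℓ : 0 < ℓ) (k : ℤ) (C : ℝ) (hC : 0 ≤ C)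
    (ω h : ℝ → ℝ)
    (hω : ContDiffOn ℝ 2 ω (Icc (-1 : ℝ) 1))
    (hP : ∀ τ ∈ Icc (-1 : ℝ) 1,
      -(τ ^ 2 + ℓ ^ 2) * iteratedDerivWithin 2 ω (Icc (-1 : ℝ) 1) τ
        - 2 * τ * derivWithin ω (Icc (-1 : ℝ) 1) τ
        + (1 + (τ + (k : ℝ)) ^ 2 / (τ ^ 2 + ℓ ^ 2)) * ω τ = h τ)
    (hh : ∀ τ ∈ Icc (-1 : ℝ) 1, |h τ| ≤ C)
    (hbc₁ : |ω (-1)| ≤ C) (hbc₂ : |ω 1| ≤ C) :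
    ∀ τ ∈ Icc (-1 : ℝ) 1, |ω τ| ≤ C := by
  have hunique : UniqueDiffOn ℝ (Icc (-1 : ℝ) 1) := uniqueDiffOn_Icc (by norm_num)
  have hupper : ∀ τ ∈ Icc (-1 : ℝ) 1, ω τ ≤ C :=
    one_side_Pplus ℓ hℓ k C hC ω h hω hP
      (fun τ hτ => (abs_le.1 (hh τ hτ)).2)
      (abs_le.1 hbc₁).2 (abs_le.1 hbc₂).2
  have hlower : ∀ τ ∈ Icc (-1 : ℝ) 1, (fun y => -ω y) τ ≤ C := by
    apply one_side_Pplus ℓ hℓ k C hC (fun y => -ω y) (fun y => -h y) hω.neg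
    · intro τ hτ
      have h1 : iteratedDerivWithin 2 (fun y => -ω y) (Icc (-1 : ℝ) 1) τ
          = -iteratedDerivWithin 2 ω (Icc (-1 : ℝ) 1) τ :=
        iteratedDerivWithin_neg (f := ω)
      have h2 : derivWithin (fun y => -ω y) (Icc (-1 : ℝ) 1) τ
          = -derivWithin ω (Icc (-1 : ℝ) 1) τ := derivWithin.neg (f := ω)
      rw [h1, h2]
      have := hP τ hτ
      ring_nf
      ring_nf at this
      linarith
    · intro τ hτ
      have := (abs_le.1 (hh τ hτ)).1
      linarith
    · have := (abs_le.1 hbc₁).1; simpa using by linarith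
    · have := (abs_le.1 hbc₂).1; simpa using by linarith
  intro τ hτ
  have := hlower τ hτ
  simp only [] at this
  exact abs_le.2 ⟨by linarith, hupper τ hτ⟩
end

section
/- Let c ∈ (0,1], α ∈ (0,1/2], and let k ≥ 1 be an integer. Define ζ(τ) = exp(αk(1/c − 1/τ)) for τ > 0. Then for every ℓ ≥ 0 and every τ with 0 < ℓ ≤ τ ≤ 1, the barrier inequality −(τ²+ℓ²)ζ''(τ) − 2τζ'(τ) + (1 + (τ+k)²/(τ²+ℓ²))ζ(τ) ≥ 0 holds; explicitly, −α²k²(τ²+ℓ²)/τ⁴ + 2αkℓ²/τ³ + 1 + (τ+k)²/(τ²+ℓ²) ≥ 0. -/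
open Real

/-- The barrier function `ζ(τ) = exp(αk(1/c − 1/τ))`. -/
noncomputable def barrierZeta (α c : ℝ) (k : ℕ) : ℝ → ℝ :=
  fun t => Real.exp (α * k * (1 / c - 1 / t))

lemma zeta_hasDerivAt (α c : ℝ) (k : ℕ) {t : ℝ} (ht : t ≠ 0) :
    HasDerivAt (barrierZeta α c k) (α * k / t ^ 2 * barrierZeta α c k t) t := by
  have h1 : HasDerivAt (fun x : ℝ => 1 / x) (-(t ^ 2)⁻¹) t := by
    simpa [one_div] using hasDerivAt_inv ht
  have h2 : HasDerivAt (fun x : ℝ => α * k * (1 / c - 1 / x)) (α * k / t ^ 2) t := by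
    have := ((hasDerivAt_const t (1 / (c:ℝ))).sub h1).const_mul (α * k)
    refine this.congr_deriv ?_
    field_simp; ring
  convert h2.exp using 1
  · rfl
  simp only [barrierZeta]; ring

lemma zeta_deriv (α c : ℝ) (k : ℕ) {t : ℝ} (ht : t ≠ 0) :
    deriv (barrierZeta α c k) t = α * k / t ^ 2 * barrierZeta α c k t :=
  (zeta_hasDerivAt α c k ht).deriv

lemma zeta_deriv2 (α c : ℝ) (k : ℕ) {t : ℝ} (ht : 0 < t) :
    deriv (deriv (barrierZeta α c k)) t
      = (-2 * (α * k) / t ^ 3 + (α * k) ^ 2 / t ^ 4) * barrierZeta α c k t := by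
  have hev : deriv (barrierZeta α c k) =ᶠ[nhds t]
      (fun x => α * k / x ^ 2 * barrierZeta α c k x) := by
    filter_upwards [eventually_ne_nhds ht.ne'] with x hx
    exact zeta_deriv α c k hx
  rw [hev.deriv_eq]
  have h1 : HasDerivAt (fun x : ℝ => α * k / x ^ 2) (-2 * (α * k) / t ^ 3) t := by
    have hpow : HasDerivAt (fun x : ℝ => x ^ 2) (2 * t) t := by
      simpa using hasDerivAt_pow 2 t
    have h := (hpow.inv (pow_ne_zero 2 ht.ne')).const_mul (α * (k:ℝ))
    refine h.congr_deriv ?_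
    field_simp
  have h2 := h1.mul (zeta_hasDerivAt α c k ht.ne')
  rw [show (fun x => α * (k:ℝ) / x ^ 2 * barrierZeta α c k x) = (fun x => α * (k:ℝ) / x ^ 2) * barrierZeta α c k from rfl, h2.deriv]
  field_simp

/-- Barrier inequality: for `c ∈ (0,1]`, `α ∈ (0,1/2]`, an integer `k ≥ 1`,
`ℓ ≥ 0` and `0 < τ ≤ 1` with `ℓ ≤ τ`, the barrier `ζ(τ) = exp(αk(1/c − 1/τ))`
satisfies `P⁺_{ℓ,k} ζ ≥ 0`, and explicitly
`−α²k²(τ²+ℓ²)/τ⁴ + 2αkℓ²/τ³ + 1 + (τ+k)²/(τ²+ℓ²) ≥ 0`. -/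
theorem barrier_inequality
    (c α : ℝ) (hc : 0 < c) (hc1 : c ≤ 1) (hα : 0 < α) (hα2 : α ≤ 1 / 2)
    (k : ℕ) (hk : 1 ≤ k)
    (ℓ τ : ℝ) (hℓ : 0 ≤ ℓ) (hτ : 0 < τ) (hℓτ : ℓ ≤ τ) (hτ1 : τ ≤ 1) :
    (-(τ ^ 2 + ℓ ^ 2) * deriv (deriv (barrierZeta α c k)) τ
        - 2 * τ * deriv (barrierZeta α c k) τ
        + (1 + (τ + (k : ℝ)) ^ 2 / (τ ^ 2 + ℓ ^ 2)) * barrierZeta α c k τ ≥ 0) ∧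
    -α ^ 2 * (k : ℝ) ^ 2 * (τ ^ 2 + ℓ ^ 2) / τ ^ 4
      + 2 * α * (k : ℝ) * ℓ ^ 2 / τ ^ 3
      + 1 + (τ + (k : ℝ)) ^ 2 / (τ ^ 2 + ℓ ^ 2) ≥ 0 := by
  have hk1 : (1:ℝ) ≤ (k:ℝ) := by exact_mod_cast hk
  have hden : (0:ℝ) < τ ^ 2 + ℓ ^ 2 := by positivity
  have hE : -α ^ 2 * (k : ℝ) ^ 2 * (τ ^ 2 + ℓ ^ 2) / τ ^ 4
      + 2 * α * (k : ℝ) * ℓ ^ 2 / τ ^ 3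
      + 1 + (τ + (k : ℝ)) ^ 2 / (τ ^ 2 + ℓ ^ 2) ≥ 0 := by
    have h1 : α ^ 2 * (k : ℝ) ^ 2 * (τ ^ 2 + ℓ ^ 2) / τ ^ 4
        ≤ (τ + (k : ℝ)) ^ 2 / (τ ^ 2 + ℓ ^ 2) := by
      rw [div_le_div_iff₀ (by positivity) hden]
      have a1 : α * (τ ^ 2 + ℓ ^ 2) ≤ τ ^ 2 := by nlinarith
      have a2 : (k:ℝ) ≤ τ + k := by linarith
      nlinarith [sq_nonneg (α * (τ ^ 2 + ℓ ^ 2)), sq_nonneg τ,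
        mul_le_mul a1 a1 (by positivity) (by positivity),
        mul_le_mul a2 a2 (by positivity) (by positivity),
        sq_nonneg ((k:ℝ) * τ ^ 2)]
    have h2 : 0 ≤ 2 * α * (k : ℝ) * ℓ ^ 2 / τ ^ 3 := by positivity
    rw [neg_mul, neg_mul, neg_div]
    linarith
  refine ⟨?_, hE⟩
  rw [zeta_deriv α c k hτ.ne', zeta_deriv2 α c k hτ]
  have hζ : 0 < barrierZeta α c k τ := Real.exp_pos _
  have hEq : -(τ ^ 2 + ℓ ^ 2) * ((-2 * (α * k) / τ ^ 3 + (α * k) ^ 2 / τ ^ 4) * barrierZeta α c k τ)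
        - 2 * τ * (α * k / τ ^ 2 * barrierZeta α c k τ)
        + (1 + (τ + (k : ℝ)) ^ 2 / (τ ^ 2 + ℓ ^ 2)) * barrierZeta α c k τ
      = (-α ^ 2 * (k : ℝ) ^ 2 * (τ ^ 2 + ℓ ^ 2) / τ ^ 4
          + 2 * α * (k : ℝ) * ℓ ^ 2 / τ ^ 3
          + 1 + (τ + (k : ℝ)) ^ 2 / (τ ^ 2 + ℓ ^ 2)) * barrierZeta α c k τ := by
    field_simp
    ring
  rw [hEq]
  exact mul_nonneg hE hζ.le
end

section
/- The function v_*(T) = (T + arctan(T) + T²·arctan(T))/√(T²+1) satisfies the second-order ordinary differential equation (P₀ v_*)(T) = −(T²+1)v_*''(T) − 2T v_*'(T) + v_*(T) + (T²/(T²+1))v_*(T) = 0 for all T ∈ ℝ. -/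
open Real

/-- `v_*(T) = (T + arctan T + T²·arctan T)/√(T²+1)`. -/
noncomputable def vStar : ℝ → ℝ :=
  fun t => (t + Real.arctan t + t ^ 2 * Real.arctan t) / Real.sqrt (t ^ 2 + 1)

noncomputable def vStar' : ℝ → ℝ :=
  fun t => (2 + t ^ 2 + t * (t ^ 2 + 1) * Real.arctan t) /
    ((t ^ 2 + 1) * Real.sqrt (t ^ 2 + 1))

noncomputable def vStar'' : ℝ → ℝ :=
  fun t => (-(3 * t) + (t ^ 2 + 1) * Real.arctan t) /
    ((t ^ 2 + 1) ^ 2 * Real.sqrt (t ^ 2 + 1))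

lemma ht_pos (t : ℝ) : (0:ℝ) < t ^ 2 + 1 := by positivity

lemma hs_pos (t : ℝ) : (0:ℝ) < Real.sqrt (t ^ 2 + 1) :=
  Real.sqrt_pos.2 (ht_pos t)

lemma hs_sq (t : ℝ) : Real.sqrt (t ^ 2 + 1) ^ 2 = t ^ 2 + 1 :=
  Real.sq_sqrt (ht_pos t).le

lemma div_helper1 (A B t s : ℝ) (hs : 0 < s) (h2 : s ^ 2 = t ^ 2 + 1) :
    (A * s - B * (t / s)) / s ^ 2 = (A * (t ^ 2 + 1) - B * t) / ((t ^ 2 + 1) * s) := by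
  rw [← h2]
  have hs0 : s ≠ 0 := hs.ne'
  field_simp

lemma div_helper2 (A B t s : ℝ) (hs : 0 < s) (h2 : s ^ 2 = t ^ 2 + 1) :
    (A * ((t ^ 2 + 1) * s) - B * (2 * t * s + (t ^ 2 + 1) * (t / s))) / ((t ^ 2 + 1) * s) ^ 2
      = (A * (t ^ 2 + 1) - 3 * (B * t)) / ((t ^ 2 + 1) ^ 2 * s) := by
  rw [← h2]
  have hs0 : s ≠ 0 := hs.ne'
  field_simp
  ring

lemma hasDerivAt_s (t : ℝ) :
    HasDerivAt (fun x : ℝ => Real.sqrt (x ^ 2 + 1))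
      (t / Real.sqrt (t ^ 2 + 1)) t := by
  have h1 : HasDerivAt (fun x : ℝ => x ^ 2 + 1) (2 * t) t := by
    simpa using (hasDerivAt_pow 2 t).add_const 1
  have h2 := (Real.hasDerivAt_sqrt (ht_pos t).ne').comp t h1
  refine h2.congr_deriv ?_
  field_simp

lemma hasDerivAt_vStar (t : ℝ) : HasDerivAt vStar (vStar' t) t := by
  have hN : HasDerivAt (fun x : ℝ => x + Real.arctan x + x ^ 2 * Real.arctan x)
      (1 + 1 / (1 + t ^ 2) + (2 * t * Real.arctan t + t ^ 2 * (1 / (1 + t ^ 2)))) t := by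
    have ha := Real.hasDerivAt_arctan t
    have hx : HasDerivAt (fun x : ℝ => x ^ 2) (2 * t) t := by
      simpa using hasDerivAt_pow 2 t
    exact ((hasDerivAt_id t).add ha).add (hx.mul ha)
  have hs := hasDerivAt_s t
  have hdiv := hN.div hs (hs_pos t).ne'
  refine hdiv.congr_deriv ?_
  rw [div_helper1 _ _ t _ (hs_pos t) (hs_sq t)]
  unfold vStar'
  congr 1
  have h1t : (1 : ℝ) + t ^ 2 ≠ 0 := by positivity
  field_simp
  ring

lemma hasDerivAt_vStar' (t : ℝ) : HasDerivAt vStar' (vStar'' t) t := by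
  have hN : HasDerivAt (fun x : ℝ => 2 + x ^ 2 + x * (x ^ 2 + 1) * Real.arctan x)
      (2 * t + ((1 * (t ^ 2 + 1) + t * (2 * t)) * Real.arctan t
        + t * (t ^ 2 + 1) * (1 / (1 + t ^ 2)))) t := by
    have ha := Real.hasDerivAt_arctan t
    have hx : HasDerivAt (fun x : ℝ => x ^ 2) (2 * t) t := by
      simpa using hasDerivAt_pow 2 t
    have hx1 : HasDerivAt (fun x : ℝ => x * (x ^ 2 + 1))
        (1 * (t ^ 2 + 1) + t * (2 * t)) t :=
      (hasDerivAt_id t).mul (hx.add_const 1)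
    exact (hx.const_add 2).add (hx1.mul ha)
  have hs := hasDerivAt_s t
  have hD : HasDerivAt (fun x : ℝ => (x ^ 2 + 1) * Real.sqrt (x ^ 2 + 1))
      (2 * t * Real.sqrt (t ^ 2 + 1) + (t ^ 2 + 1) * (t / Real.sqrt (t ^ 2 + 1))) t := by
    have hx : HasDerivAt (fun x : ℝ => x ^ 2 + 1) (2 * t) t := by
      simpa using (hasDerivAt_pow 2 t).add_const 1
    exact hx.mul hs
  have hDne : (t ^ 2 + 1) * Real.sqrt (t ^ 2 + 1) ≠ 0 := by positivity
  have hdiv := hN.div hD hDne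
  refine hdiv.congr_deriv ?_
  rw [div_helper2 _ _ t _ (hs_pos t) (hs_sq t)]
  unfold vStar''
  congr 1
  have h1t : (1 : ℝ) + t ^ 2 ≠ 0 := by positivity
  field_simp
  ring

/-- `v_*` solves the model ODE
`P₀v = -(T²+1)v'' - 2Tv' + v + (T²/(T²+1))v = 0`. -/
theorem vStar_solves_P0 :
    ∀ T : ℝ,
      -(T ^ 2 + 1) * deriv (deriv vStar) T
        - 2 * T * deriv vStar T
        + vStar T
        + (T ^ 2 / (T ^ 2 + 1)) * vStar T = 0 := by
  intro T
  have hd1 : deriv vStar = vStar' := funext fun t => (hasDerivAt_vStar t).deriv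
  have hd2 : deriv (deriv vStar) T = vStar'' T := by
    rw [hd1]; exact (hasDerivAt_vStar' T).deriv
  rw [hd2, hd1]
  unfold vStar vStar' vStar''
  have h2 := hs_sq T
  have hsp := hs_pos T
  have htp := ht_pos T
  have hs0 : Real.sqrt (T ^ 2 + 1) ≠ 0 := hsp.ne'
  have ht0 : (T:ℝ) ^ 2 + 1 ≠ 0 := htp.ne'
  field_simp
  ring_nf
end

section
/- Let k ≥ 1 be an integer and fix τ with 0 < τ ≤ 1. Then lim_{ℓ→0⁺} cosh((k/ℓ)·arctan(τ/ℓ)) / e^{(k/ℓ)·arctan(1/ℓ)} = (1/2)·e^{(1 − 1/τ)k}. -/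
open Real Filter Topology

/-- For an integer `k ≥ 1` and fixed `0 < τ ≤ 1`,
`lim_{ℓ→0⁺} cosh((k/ℓ)arctan(τ/ℓ))/e^{(k/ℓ)arctan(1/ℓ)} = (1/2)e^{(1−1/τ)k}`. -/
theorem cosh_arctan_limit (k : ℕ) (hk : 1 ≤ k) (τ : ℝ) (hτ : 0 < τ) (hτ1 : τ ≤ 1) :
    Tendsto (fun ℓ : ℝ =>
        Real.cosh ((k : ℝ) / ℓ * Real.arctan (τ / ℓ)) /
          Real.exp ((k : ℝ) / ℓ * Real.arctan (1 / ℓ)))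
      (𝓝[>] 0) (𝓝 (1 / 2 * Real.exp ((1 - 1 / τ) * k))) := by
  have hkpos : (0 : ℝ) < k := by exact_mod_cast hk
  -- slope limits
  have h1 : Tendsto (fun ℓ : ℝ => arctan ℓ / ℓ) (𝓝[>] 0) (𝓝 1) := by
    have hd : HasDerivAt arctan (1 : ℝ) 0 := by
      simpa using Real.hasDerivAt_arctan 0
    have := hasDerivAt_iff_tendsto_slope.mp hd
    have h := this.mono_left (nhdsWithin_mono 0 (fun x hx => ne_of_gt hx))
    refine h.congr (fun x => ?_)
    simp [slope_def_field, div_eq_mul_inv, mul_comm]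
  have h2 : Tendsto (fun ℓ : ℝ => arctan (ℓ / τ) / ℓ) (𝓝[>] 0) (𝓝 (1 / τ)) := by
    have hd : HasDerivAt (fun ℓ : ℝ => arctan (ℓ / τ)) (1 / τ) 0 := by
      have := (Real.hasDerivAt_arctan ((0:ℝ) / τ)).comp 0 ((hasDerivAt_id (0:ℝ)).div_const τ)
      simpa [Function.comp_def] using this
    have := hasDerivAt_iff_tendsto_slope.mp hd
    have h := this.mono_left (nhdsWithin_mono 0 (fun x hx => ne_of_gt hx))
    refine h.congr (fun x => ?_)
    simp [slope_def_field, div_eq_mul_inv, mul_comm]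
  -- A := x - y tends to (1-1/τ)*k
  have hA : Tendsto (fun ℓ : ℝ => (k : ℝ) / ℓ * arctan (τ / ℓ) - (k : ℝ) / ℓ * arctan (1 / ℓ))
      (𝓝[>] 0) (𝓝 ((1 - 1 / τ) * k)) := by
    have hlim : Tendsto (fun ℓ : ℝ => (k : ℝ) * (arctan ℓ / ℓ) - (k : ℝ) * (arctan (ℓ / τ) / ℓ))
        (𝓝[>] 0) (𝓝 ((k : ℝ) * 1 - (k : ℝ) * (1 / τ))) :=
      (h1.const_mul _).sub (h2.const_mul _)
    have heq : ∀ᶠ ℓ in 𝓝[>] (0:ℝ),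
        (k : ℝ) * (arctan ℓ / ℓ) - (k : ℝ) * (arctan (ℓ / τ) / ℓ) =
        (k : ℝ) / ℓ * arctan (τ / ℓ) - (k : ℝ) / ℓ * arctan (1 / ℓ) := by
      filter_upwards [self_mem_nhdsWithin] with ℓ hℓ
      have hℓ0 : (0:ℝ) < ℓ := hℓ
      have e1 : arctan (τ / ℓ) = π / 2 - arctan (ℓ / τ) := by
        rw [show τ / ℓ = (ℓ / τ)⁻¹ by rw [inv_div]]
        exact Real.arctan_inv_of_pos (div_pos hℓ0 hτ)
      have e2 : arctan (1 / ℓ) = π / 2 - arctan ℓ := by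
        rw [one_div]
        exact Real.arctan_inv_of_pos hℓ0
      rw [e1, e2]
      field_simp
      ring
    have := hlim.congr' heq
    convert this using 2
    ring
  -- B := -x - y tends to atBot
  have hC : Tendsto (fun ℓ : ℝ => (k : ℝ) / ℓ * (arctan (τ / ℓ) + arctan (1 / ℓ)))
      (𝓝[>] 0) atTop := by
    have hkl : Tendsto (fun ℓ : ℝ => (k : ℝ) / ℓ) (𝓝[>] 0) atTop := by
      have := tendsto_inv_nhdsGT_zero (𝕜 := ℝ)
      have h := this.const_mul_atTop hkpos
      refine h.congr (fun x => ?_)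
      rw [div_eq_mul_inv]
    have hinv := tendsto_inv_nhdsGT_zero (𝕜 := ℝ)
    have ht1 : Tendsto (fun ℓ : ℝ => arctan (τ / ℓ)) (𝓝[>] 0) (𝓝 (π / 2)) := by
      have htop : Tendsto (fun ℓ : ℝ => τ / ℓ) (𝓝[>] 0) atTop := by
        have := hinv.const_mul_atTop hτ
        refine this.congr (fun x => ?_)
        rw [div_eq_mul_inv]
      exact (Real.tendsto_arctan_atTop.mono_right nhdsWithin_le_nhds).comp htop
    have ht2 : Tendsto (fun ℓ : ℝ => arctan (1 / ℓ)) (𝓝[>] 0) (𝓝 (π / 2)) := by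
      have htop : Tendsto (fun ℓ : ℝ => 1 / ℓ) (𝓝[>] 0) atTop := by
        simpa [one_div] using hinv
      exact (Real.tendsto_arctan_atTop.mono_right nhdsWithin_le_nhds).comp htop
    have hsum := ht1.add ht2
    exact hkl.atTop_mul_pos (by positivity) hsum
  have hB : Tendsto (fun ℓ : ℝ =>
      -((k : ℝ) / ℓ * arctan (τ / ℓ)) - (k : ℝ) / ℓ * arctan (1 / ℓ)) (𝓝[>] 0) atBot := by
    have h := tendsto_neg_atTop_atBot.comp hC
    refine h.congr (fun x => ?_)
    simp [mul_add]
    ring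
  -- combine
  have hfinal : Tendsto (fun ℓ : ℝ =>
      (Real.exp ((k : ℝ) / ℓ * arctan (τ / ℓ) - (k : ℝ) / ℓ * arctan (1 / ℓ)) +
       Real.exp (-((k : ℝ) / ℓ * arctan (τ / ℓ)) - (k : ℝ) / ℓ * arctan (1 / ℓ))) / 2)
      (𝓝[>] 0) (𝓝 ((Real.exp ((1 - 1 / τ) * k) + 0) / 2)) := by
    exact ((Real.continuous_exp.continuousAt.tendsto.comp hA).add
      (Real.tendsto_exp_atBot.comp hB)).div_const 2
  have heq : ∀ x y : ℝ, Real.cosh x / Real.exp y =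
      (Real.exp (x - y) + Real.exp (-x - y)) / 2 := by
    intro x y
    rw [Real.cosh_eq, Real.exp_sub, Real.exp_sub]
    field_simp
  have := hfinal.congr (fun ℓ => (heq _ _).symm)
  convert this using 2
  ring
end

section
/- Let ℓ > 0 and let k ≥ 1 be an integer. Then 2π·∫₀^1 cosh((2k/ℓ)·arctan(τ/ℓ))/(τ²+ℓ²)² dτ = (π/(2k(k²+ℓ²)(1+ℓ²)))·(2k·cosh((2k/ℓ)·arctan(1/ℓ)) + (2k²+1+ℓ²)·sinh((2k/ℓ)·arctan(1/ℓ))). -/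
open Real intervalIntegral

lemma antideriv (ℓ a : ℝ) (hℓ : 0 < ℓ) (ha : a ≠ 0) (τ : ℝ) :
    HasDerivAt (fun t : ℝ =>
      Real.sinh (a * Real.arctan (t / ℓ)) / (2 * a * ℓ ^ 3) +
      (a * Real.sinh (a * Real.arctan (t / ℓ)) * (ℓ ^ 2 - t ^ 2) +
        4 * ℓ * Real.cosh (a * Real.arctan (t / ℓ)) * t) /
        (2 * (a ^ 2 + 4) * ℓ ^ 3 * (t ^ 2 + ℓ ^ 2)))
      (Real.cosh (a * Real.arctan (τ / ℓ)) / (τ ^ 2 + ℓ ^ 2) ^ 2) τ := by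
  have hℓ0 : ℓ ≠ 0 := hℓ.ne'
  have hden : τ ^ 2 + ℓ ^ 2 ≠ 0 := by positivity
  have hden2 : (2 : ℝ) * (a ^ 2 + 4) * ℓ ^ 3 * (τ ^ 2 + ℓ ^ 2) ≠ 0 := by positivity
  have h1p : 1 + (τ / ℓ) ^ 2 ≠ 0 := by positivity
  have hu : HasDerivAt (fun t : ℝ => a * Real.arctan (t / ℓ))
      (a * (1 / (1 + (τ / ℓ) ^ 2) * (1 / ℓ))) τ := by
    have h1 : HasDerivAt (fun t : ℝ => t / ℓ) (1 / ℓ) τ := by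
      simpa using (hasDerivAt_id τ).div_const ℓ
    exact ((Real.hasDerivAt_arctan (τ / ℓ)).comp τ h1).const_mul a
  have hs : HasDerivAt (fun t : ℝ => Real.sinh (a * Real.arctan (t / ℓ)))
      (Real.cosh (a * Real.arctan (τ / ℓ)) * (a * (1 / (1 + (τ / ℓ) ^ 2) * (1 / ℓ)))) τ :=
    (Real.hasDerivAt_sinh _).comp τ hu
  have hc : HasDerivAt (fun t : ℝ => Real.cosh (a * Real.arctan (t / ℓ)))
      (Real.sinh (a * Real.arctan (τ / ℓ)) * (a * (1 / (1 + (τ / ℓ) ^ 2) * (1 / ℓ)))) τ :=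
    (Real.hasDerivAt_cosh _).comp τ hu
  have hN : HasDerivAt (fun t : ℝ =>
      a * Real.sinh (a * Real.arctan (t / ℓ)) * (ℓ ^ 2 - t ^ 2) +
        4 * ℓ * Real.cosh (a * Real.arctan (t / ℓ)) * t)
      ((a * (Real.cosh (a * Real.arctan (τ / ℓ)) * (a * (1 / (1 + (τ / ℓ) ^ 2) * (1 / ℓ))))) * (ℓ ^ 2 - τ ^ 2)
        + (a * Real.sinh (a * Real.arctan (τ / ℓ))) * (-(2 * τ))
        + ((4 * ℓ * (Real.sinh (a * Real.arctan (τ / ℓ)) * (a * (1 / (1 + (τ / ℓ) ^ 2) * (1 / ℓ))))) * τ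
          + 4 * ℓ * Real.cosh (a * Real.arctan (τ / ℓ)) * 1)) τ := by
    have hp : HasDerivAt (fun t : ℝ => ℓ ^ 2 - t ^ 2) (-(2 * τ)) τ := by
      simpa using ((hasDerivAt_pow 2 τ).const_sub (ℓ ^ 2))
    exact ((hs.const_mul a).mul hp).add ((hc.const_mul (4 * ℓ)).mul (hasDerivAt_id τ))
  have hD : HasDerivAt (fun t : ℝ => 2 * (a ^ 2 + 4) * ℓ ^ 3 * (t ^ 2 + ℓ ^ 2))
      (2 * (a ^ 2 + 4) * ℓ ^ 3 * (2 * τ)) τ := by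
    have : HasDerivAt (fun t : ℝ => t ^ 2 + ℓ ^ 2) (2 * τ) τ := by
      simpa using ((hasDerivAt_pow 2 τ).add_const (ℓ ^ 2))
    exact this.const_mul _
  have hfull := ((hs.div_const (2 * a * ℓ ^ 3)).add (hN.div hD hden2))
  refine hfull.congr_deriv ?_
  field_simp
  ring

/-- Closed-form evaluation of the squared L² norm integral:
`2π·∫₀¹ cosh((2k/ℓ)arctan(τ/ℓ))/(τ²+ℓ²)² dτ
  = (π/(2k(k²+ℓ²)(1+ℓ²)))·(2k·cosh((2k/ℓ)arctan(1/ℓ))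
      + (2k²+1+ℓ²)·sinh((2k/ℓ)arctan(1/ℓ)))`. -/
theorem L2_norm_integral_eval (ℓ : ℝ) (hℓ : 0 < ℓ) (k : ℕ) (hk : 1 ≤ k) :
    2 * π *
        ∫ τ in (0 : ℝ)..1,
          Real.cosh (2 * (k : ℝ) / ℓ * Real.arctan (τ / ℓ)) / (τ ^ 2 + ℓ ^ 2) ^ 2
      = π / (2 * (k : ℝ) * ((k : ℝ) ^ 2 + ℓ ^ 2) * (1 + ℓ ^ 2)) *
          (2 * (k : ℝ) * Real.cosh (2 * (k : ℝ) / ℓ * Real.arctan (1 / ℓ))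
            + (2 * (k : ℝ) ^ 2 + 1 + ℓ ^ 2) *
                Real.sinh (2 * (k : ℝ) / ℓ * Real.arctan (1 / ℓ))) := by
  have hℓ0 : ℓ ≠ 0 := hℓ.ne'
  have hk0 : (k : ℝ) ≠ 0 := by positivity
  set a : ℝ := 2 * (k : ℝ) / ℓ with ha_def
  have ha : a ≠ 0 := by
    simp only [ha_def]
    positivity
  set F : ℝ → ℝ := fun t =>
      Real.sinh (a * Real.arctan (t / ℓ)) / (2 * a * ℓ ^ 3) +
      (a * Real.sinh (a * Real.arctan (t / ℓ)) * (ℓ ^ 2 - t ^ 2) +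
        4 * ℓ * Real.cosh (a * Real.arctan (t / ℓ)) * t) /
        (2 * (a ^ 2 + 4) * ℓ ^ 3 * (t ^ 2 + ℓ ^ 2)) with hF
  have hint : (∫ τ in (0 : ℝ)..1,
      Real.cosh (a * Real.arctan (τ / ℓ)) / (τ ^ 2 + ℓ ^ 2) ^ 2) = F 1 - F 0 := by
    apply intervalIntegral.integral_eq_sub_of_hasDerivAt
    · intro τ _
      exact antideriv ℓ a hℓ ha τ
    · apply Continuous.intervalIntegrable
      apply Continuous.div
      · exact (Real.continuous_cosh.comp (continuous_const.mul (Real.continuous_arctan.comp (continuous_id.div_const ℓ))))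
      · fun_prop
      · intro x; positivity
  have hF0 : F 0 = 0 := by
    simp [hF]
  have hF1 : F 1 = Real.sinh (a * Real.arctan (1 / ℓ)) / (2 * a * ℓ ^ 3) +
      (a * Real.sinh (a * Real.arctan (1 / ℓ)) * (ℓ ^ 2 - 1) +
        4 * ℓ * Real.cosh (a * Real.arctan (1 / ℓ))) /
        (2 * (a ^ 2 + 4) * ℓ ^ 3 * (1 + ℓ ^ 2)) := by
    norm_num [hF]
  rw [show (2 : ℝ) * (k : ℝ) / ℓ = a from rfl] at *
  rw [hint, hF0, hF1]
  have hkℓ : (k : ℝ) ^ 2 + ℓ ^ 2 ≠ 0 := by positivity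
  have h1ℓ : (1 : ℝ) + ℓ ^ 2 ≠ 0 := by positivity
  have ha4 : a ^ 2 + 4 ≠ 0 := by positivity
  have haval : a = 2 * (k : ℝ) / ℓ := ha_def
  rw [haval]
  field_simp
  ring
end

section
/- There exist constants c₀ > 0 and c₁ > 0 such that for every integer k ≥ 1 and every ℓ with 0 < ℓ ≤ 1: c₀ ≤ 2π·k·e^{−(2k/ℓ)·arctan(1/ℓ)}·∫₀^1 cosh((2k/ℓ)·arctan(τ/ℓ))/(τ²+ℓ²)² dτ ≤ c₁. -/
open Real intervalIntegral

private lemma hasDeriv_aux (K ℓ : ℝ) (hK : 1 ≤ K) (hℓ : 0 < ℓ) (τ : ℝ) :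
    HasDerivAt (fun t : ℝ =>
      (Real.exp (2 * K / ℓ * Real.arctan (t / ℓ)) * (t ^ 2 + 2 * K * t + 2 * K ^ 2 + ℓ ^ 2) -
        Real.exp (-(2 * K / ℓ * Real.arctan (t / ℓ))) *
          (t ^ 2 - 2 * K * t + 2 * K ^ 2 + ℓ ^ 2)) /
        (8 * K * (K ^ 2 + ℓ ^ 2) * (t ^ 2 + ℓ ^ 2)))
      (Real.cosh (2 * K / ℓ * Real.arctan (τ / ℓ)) / (τ ^ 2 + ℓ ^ 2) ^ 2) τ := by
  have hK0 : (0:ℝ) < K := lt_of_lt_of_le one_pos hK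
  have hℓne : ℓ ≠ 0 := ne_of_gt hℓ
  have hτℓ : (0:ℝ) < τ ^ 2 + ℓ ^ 2 := by positivity
  have h1 : HasDerivAt (fun t : ℝ => t / ℓ) (1 / ℓ) τ := by
    simpa using (hasDerivAt_id τ).div_const ℓ
  have harc : HasDerivAt (fun t : ℝ => Real.arctan (t / ℓ)) (ℓ / (τ ^ 2 + ℓ ^ 2)) τ := by
    have h := (Real.hasDerivAt_arctan (τ / ℓ)).comp τ h1
    refine h.congr_deriv ?_
    have h2 : (1:ℝ) + (τ / ℓ) ^ 2 ≠ 0 := by positivity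
    field_simp <;> ring
  have hu : HasDerivAt (fun t : ℝ => 2 * K / ℓ * Real.arctan (t / ℓ))
      (2 * K / (τ ^ 2 + ℓ ^ 2)) τ := by
    have h := harc.const_mul (2 * K / ℓ)
    refine h.congr_deriv ?_
    field_simp <;> ring
  have hE1 := hu.exp
  have hE2 := hu.neg.exp
  have hp1 : HasDerivAt (fun t : ℝ => t ^ 2 + 2 * K * t + 2 * K ^ 2 + ℓ ^ 2)
      (2 * τ + 2 * K) τ := by
    have h := (((hasDerivAt_pow 2 τ).add
      ((hasDerivAt_id τ).const_mul (2 * K))).add_const (2 * K ^ 2)).add_const (ℓ ^ 2)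
    refine h.congr_deriv ?_
    ring
  have hp2 : HasDerivAt (fun t : ℝ => t ^ 2 - 2 * K * t + 2 * K ^ 2 + ℓ ^ 2)
      (2 * τ - 2 * K) τ := by
    have h := (((hasDerivAt_pow 2 τ).sub
      ((hasDerivAt_id τ).const_mul (2 * K))).add_const (2 * K ^ 2)).add_const (ℓ ^ 2)
    refine h.congr_deriv ?_
    ring
  have hN := (hE1.mul hp1).sub (hE2.mul hp2)
  have hD : HasDerivAt (fun t : ℝ => 8 * K * (K ^ 2 + ℓ ^ 2) * (t ^ 2 + ℓ ^ 2))
      (8 * K * (K ^ 2 + ℓ ^ 2) * (2 * τ)) τ := by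
    have h := ((hasDerivAt_pow 2 τ).add_const (ℓ ^ 2)).const_mul (8 * K * (K ^ 2 + ℓ ^ 2))
    refine h.congr_deriv ?_
    ring
  have hDne : 8 * K * (K ^ 2 + ℓ ^ 2) * (τ ^ 2 + ℓ ^ 2) ≠ 0 := by positivity
  have h := hN.div hD hDne
  refine h.congr_deriv ?_
  simp only [Pi.mul_apply, Pi.sub_apply, Pi.neg_apply]
  rw [Real.cosh_eq]
  have hτℓne : τ ^ 2 + ℓ ^ 2 ≠ 0 := ne_of_gt hτℓ
  have hKne : K ≠ 0 := ne_of_gt hK0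
  have hKℓne : K ^ 2 + ℓ ^ 2 ≠ 0 := by positivity
  field_simp
  ring

set_option maxHeartbeats 1600000 in
/-- Uniform normalization bounds: there exist `c₀, c₁ > 0` such that for all
integers `k ≥ 1` and all `0 < ℓ ≤ 1`,
`c₀ ≤ 2πk·e^{−(2k/ℓ)arctan(1/ℓ)}·∫₀¹ cosh((2k/ℓ)arctan(τ/ℓ))/(τ²+ℓ²)² dτ ≤ c₁`. -/
theorem normalized_L2_bounds :
    ∃ c₀ c₁ : ℝ, 0 < c₀ ∧ 0 < c₁ ∧
      ∀ (k : ℕ), 1 ≤ k → ∀ ℓ : ℝ, 0 < ℓ → ℓ ≤ 1 →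
        c₀ ≤ 2 * π * (k : ℝ) * Real.exp (-(2 * (k : ℝ) / ℓ) * Real.arctan (1 / ℓ)) *
              ∫ τ in (0 : ℝ)..1,
                Real.cosh (2 * (k : ℝ) / ℓ * Real.arctan (τ / ℓ)) / (τ ^ 2 + ℓ ^ 2) ^ 2 ∧
          2 * π * (k : ℝ) * Real.exp (-(2 * (k : ℝ) / ℓ) * Real.arctan (1 / ℓ)) *
              ∫ τ in (0 : ℝ)..1,
                Real.cosh (2 * (k : ℝ) / ℓ * Real.arctan (τ / ℓ)) / (τ ^ 2 + ℓ ^ 2) ^ 2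
            ≤ c₁ := by
  refine ⟨π / 16, 3 * π / 2, by positivity, by positivity, ?_⟩
  intro k hk ℓ hℓ hℓ1
  set K : ℝ := (k : ℝ) with hKdef
  have hK : 1 ≤ K := by rw [hKdef]; exact_mod_cast hk
  have hK0 : (0:ℝ) < K := lt_of_lt_of_le one_pos hK
  have hℓne : ℓ ≠ 0 := ne_of_gt hℓ
  -- evaluate the integral
  have hcont : Continuous fun τ : ℝ =>
      Real.cosh (2 * K / ℓ * Real.arctan (τ / ℓ)) / (τ ^ 2 + ℓ ^ 2) ^ 2 := by
    apply Continuous.div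
    · exact Real.continuous_cosh.comp
        (continuous_const.mul (Real.continuous_arctan.comp (continuous_id.div_const ℓ)))
    · continuity
    · intro x; positivity
  have hint : (∫ τ in (0 : ℝ)..1,
      Real.cosh (2 * K / ℓ * Real.arctan (τ / ℓ)) / (τ ^ 2 + ℓ ^ 2) ^ 2) =
      ((Real.exp (2 * K / ℓ * Real.arctan (1 / ℓ)) *
          ((1:ℝ) ^ 2 + 2 * K * 1 + 2 * K ^ 2 + ℓ ^ 2) -
        Real.exp (-(2 * K / ℓ * Real.arctan (1 / ℓ))) *
          ((1:ℝ) ^ 2 - 2 * K * 1 + 2 * K ^ 2 + ℓ ^ 2)) /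
        (8 * K * (K ^ 2 + ℓ ^ 2) * ((1:ℝ) ^ 2 + ℓ ^ 2))) -
      ((Real.exp (2 * K / ℓ * Real.arctan (0 / ℓ)) *
          ((0:ℝ) ^ 2 + 2 * K * 0 + 2 * K ^ 2 + ℓ ^ 2) -
        Real.exp (-(2 * K / ℓ * Real.arctan (0 / ℓ))) *
          ((0:ℝ) ^ 2 - 2 * K * 0 + 2 * K ^ 2 + ℓ ^ 2)) /
        (8 * K * (K ^ 2 + ℓ ^ 2) * ((0:ℝ) ^ 2 + ℓ ^ 2))) := by
    exact intervalIntegral.integral_eq_sub_of_hasDerivAt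
      (fun x _ => hasDeriv_aux K ℓ hK hℓ x) (hcont.intervalIntegrable 0 1)
  have hzero : ((Real.exp (2 * K / ℓ * Real.arctan (0 / ℓ)) *
          ((0:ℝ) ^ 2 + 2 * K * 0 + 2 * K ^ 2 + ℓ ^ 2) -
        Real.exp (-(2 * K / ℓ * Real.arctan (0 / ℓ))) *
          ((0:ℝ) ^ 2 - 2 * K * 0 + 2 * K ^ 2 + ℓ ^ 2)) /
        (8 * K * (K ^ 2 + ℓ ^ 2) * ((0:ℝ) ^ 2 + ℓ ^ 2))) = 0 := by
    simp [Real.arctan_zero]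
  rw [hint, hzero, sub_zero]
  -- abbreviations
  set A := Real.arctan (1 / ℓ) with hA
  set s := Real.exp (2 * K / ℓ * A) with hs
  have hs0 : 0 < s := Real.exp_pos _
  have hsne : s ≠ 0 := ne_of_gt hs0
  have hexp_neg1 : Real.exp (-(2 * K / ℓ * A)) = s⁻¹ := by rw [Real.exp_neg]
  have hexp_neg2 : Real.exp (-(2 * K / ℓ) * A) = s⁻¹ := by
    rw [neg_mul, Real.exp_neg]
  -- s ≥ 2, hence s² ≥ 4
  have hA4 : π / 4 ≤ A := by
    rw [hA, ← Real.arctan_one]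
    exact Real.arctan_strictMono.monotone (by rw [le_div_iff₀ hℓ]; linarith)
  have hπ : (3:ℝ) ≤ π := by
    have := Real.pi_gt_three; linarith
  have hx1 : (1:ℝ) ≤ 2 * K / ℓ * A := by
    have h2K : (2:ℝ) ≤ 2 * K / ℓ := by
      rw [le_div_iff₀ hℓ]; nlinarith
    nlinarith
  have hs2 : (2:ℝ) ≤ s := by
    have h := Real.add_one_le_exp (1:ℝ)
    have hmono := Real.exp_le_exp.mpr hx1
    rw [hs]; linarith
  have hs4 : (4:ℝ) ≤ s ^ 2 := by nlinarith
  rw [hexp_neg1, hexp_neg2]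
  -- closed form
  have hKℓpos : (0:ℝ) < K ^ 2 + ℓ ^ 2 := by positivity
  have hEq : 2 * π * K * s⁻¹ *
      ((s * ((1:ℝ) ^ 2 + 2 * K * 1 + 2 * K ^ 2 + ℓ ^ 2) -
        s⁻¹ * ((1:ℝ) ^ 2 - 2 * K * 1 + 2 * K ^ 2 + ℓ ^ 2)) /
        (8 * K * (K ^ 2 + ℓ ^ 2) * ((1:ℝ) ^ 2 + ℓ ^ 2))) =
      π * (s ^ 2 * (1 + 2 * K + 2 * K ^ 2 + ℓ ^ 2) - (1 - 2 * K + 2 * K ^ 2 + ℓ ^ 2)) /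
        (4 * (K ^ 2 + ℓ ^ 2) * (1 + ℓ ^ 2) * s ^ 2) := by
    field_simp
    ring
  rw [hEq]
  have hden : (0:ℝ) < 4 * (K ^ 2 + ℓ ^ 2) * (1 + ℓ ^ 2) * s ^ 2 := by positivity
  have hπ0 : (0:ℝ) < π := Real.pi_pos
  have hQ0 : (0:ℝ) ≤ 1 - 2 * K + 2 * K ^ 2 + ℓ ^ 2 := by nlinarith
  have hQP : (1:ℝ) - 2 * K + 2 * K ^ 2 + ℓ ^ 2 ≤ 1 + 2 * K + 2 * K ^ 2 + ℓ ^ 2 := by nlinarith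
  have hP2 : 2 * K ^ 2 ≤ 1 + 2 * K + 2 * K ^ 2 + ℓ ^ 2 := by nlinarith
  have hP6 : 1 + 2 * K + 2 * K ^ 2 + ℓ ^ 2 ≤ 6 * K ^ 2 := by nlinarith
  have hℓ2 : ℓ ^ 2 ≤ 1 := by nlinarith
  have hK2 : (1:ℝ) ≤ K ^ 2 := by nlinarith
  have hX4 : (K ^ 2 + ℓ ^ 2) * (1 + ℓ ^ 2) ≤ 4 * K ^ 2 := by
    nlinarith [mul_le_mul_of_nonneg_left hℓ2 (sq_nonneg K), mul_le_mul_of_nonneg_left hℓ2 (sq_nonneg ℓ)]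
  have hXlo : K ^ 2 ≤ (K ^ 2 + ℓ ^ 2) * (1 + ℓ ^ 2) := by nlinarith
  have hcore1 : (K ^ 2 + ℓ ^ 2) * (1 + ℓ ^ 2) * s ^ 2 ≤
      4 * (s ^ 2 * (1 + 2 * K + 2 * K ^ 2 + ℓ ^ 2) - (1 - 2 * K + 2 * K ^ 2 + ℓ ^ 2)) := by
    nlinarith [mul_le_mul_of_nonneg_right hX4 (sq_nonneg s),
      mul_nonneg (by nlinarith : (0:ℝ) ≤ s ^ 2 - 1)
        (by nlinarith : (0:ℝ) ≤ (1 + 2 * K + 2 * K ^ 2 + ℓ ^ 2) - 2 * K ^ 2),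
      mul_nonneg (by positivity : (0:ℝ) ≤ K ^ 2) (by linarith : (0:ℝ) ≤ s ^ 2 - 4)]
  have hcore2 : s ^ 2 * (1 + 2 * K + 2 * K ^ 2 + ℓ ^ 2) - (1 - 2 * K + 2 * K ^ 2 + ℓ ^ 2) ≤
      6 * ((K ^ 2 + ℓ ^ 2) * (1 + ℓ ^ 2) * s ^ 2) := by
    nlinarith [mul_le_mul_of_nonneg_right hP6 (sq_nonneg s),
      mul_le_mul_of_nonneg_right hXlo (sq_nonneg s)]
  constructor
  · rw [div_le_div_iff₀ (by norm_num : (0:ℝ) < 16) hden]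
    nlinarith [mul_le_mul_of_nonneg_left hcore1 hπ0.le]
  · rw [div_le_div_iff₀ hden (by norm_num : (0:ℝ) < 2)]
    nlinarith [mul_le_mul_of_nonneg_left hcore2 hπ0.le]
end
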